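/- arXiv:2302.07348 — 2 statements merged into one kernel-verified Lean document; each statement's English description precedes it below -/
import Mathlib

section
/- For fixed s > 0, the function x ↦ log Φ(−s/√(1 + d/(e^x·s²))) (the approximate Gaussian-model error curve on log-log scale in n = e^x) is eventually convex for large x; i.e., in the large-n regime it exhibits power-law-like (non-concave) scaling toward the irreducible error Φ(−s). -/
/-!
Write `f(x) = log Φ(v(x))` with `v(x) = -s / √(1 + y)` and `y = A e^{-x}`, `A = d / s²`.
With `λ = φ / Φ` one has `(log Φ)' = λ` and `λ' = -λ (t + λ)`, so
`f'' = λ(v) (v'' - (v + λ(v)) v'²)`. Here `v < 0`, and since `v ≥ -s` also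
`λ(v) ≤ C := φ(0) / Φ(-s)`. A direct computation gives `v' = -s y / (2 r³)` and
`v'' = s y (2 - y) / (4 r⁵)` with `r = √(1 + y) ≥ 1`, so `f'' ≥ 0` as soon as
`C s y ≤ 2 - y`, which holds once `y = A e^{-x}` is small, i.e. for all large `x`.
-/

/-- The standard normal CDF `Φ`. -/
noncomputable def stdNormalCDF (t : ℝ) : ℝ :=
  ∫ u in Set.Iic t, (1 / Real.sqrt (2 * Real.pi)) * Real.exp (-u ^ 2 / 2)

open MeasureTheory Real Set

noncomputable def stdNormalPDF (u : ℝ) : ℝ := 1 / √(2 * π) * exp (-u ^ 2 / 2)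

lemma stdNormalPDF_pos (u : ℝ) : 0 < stdNormalPDF u := by
  unfold stdNormalPDF; positivity

lemma continuous_stdNormalPDF : Continuous stdNormalPDF := by
  unfold stdNormalPDF; fun_prop

lemma integrable_stdNormalPDF : Integrable stdNormalPDF := by
  convert (integrable_exp_neg_mul_sq (b := 1 / 2) (by norm_num)).const_mul (1 / √(2 * π))
    using 2 with u
  unfold stdNormalPDF
  ring_nf

lemma hasDerivAt_stdNormalPDF (u : ℝ) : HasDerivAt stdNormalPDF (-u * stdNormalPDF u) u := by
  have hexponent : HasDerivAt (fun u : ℝ => -u ^ 2 / 2) (-u) u :=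
    ((hasDerivAt_pow 2 u).neg.div_const 2).congr_deriv (by push_cast; ring)
  exact (hexponent.exp.const_mul _).congr_deriv (by unfold stdNormalPDF; ring)

lemma stdNormalPDF_le_stdNormalPDF_zero (u : ℝ) : stdNormalPDF u ≤ stdNormalPDF 0 := by
  unfold stdNormalPDF
  gcongr _ * ?_
  exact exp_le_exp.2 (by nlinarith [sq_nonneg u])

lemma stdNormalCDF_eq_integral (t : ℝ) : stdNormalCDF t = ∫ u in Iic t, stdNormalPDF u := rfl

lemma stdNormalCDF_pos (t : ℝ) : 0 < stdNormalCDF t := by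
  rw [stdNormalCDF_eq_integral, setIntegral_pos_iff_support_of_nonneg_ae
    (.of_forall fun u => (stdNormalPDF_pos u).le) integrable_stdNormalPDF.integrableOn,
    Function.support_eq_univ fun u => (stdNormalPDF_pos u).ne']
  simp

lemma monotone_stdNormalCDF : Monotone stdNormalCDF := fun _ _ hab =>
  setIntegral_mono_set integrable_stdNormalPDF.integrableOn
    (.of_forall fun u => (stdNormalPDF_pos u).le) (Iic_subset_Iic.2 hab).eventuallyLE

lemma hasDerivAt_stdNormalCDF (t : ℝ) : HasDerivAt stdNormalCDF (stdNormalPDF t) t := by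
  have hsplit : stdNormalCDF = fun u => stdNormalCDF 0 + ∫ x in (0 : ℝ)..u, stdNormalPDF x := by
    ext u
    rw [← intervalIntegral.integral_Iic_sub_Iic integrable_stdNormalPDF.integrableOn
      integrable_stdNormalPDF.integrableOn, stdNormalCDF_eq_integral, stdNormalCDF_eq_integral]
    ring
  rw [hsplit]
  exact (intervalIntegral.integral_hasDerivAt_right integrable_stdNormalPDF.intervalIntegrable
    (continuous_stdNormalPDF.stronglyMeasurableAtFilter _ _)
    continuous_stdNormalPDF.continuousAt).const_add _

/-- The classical inverse Mills ratio `φ(u) / (1 - Φ(u))` at `u = -t`. -/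
noncomputable def invMillsRatio (t : ℝ) : ℝ := stdNormalPDF t / stdNormalCDF t

lemma invMillsRatio_pos (t : ℝ) : 0 < invMillsRatio t :=
  div_pos (stdNormalPDF_pos t) (stdNormalCDF_pos t)

lemma invMillsRatio_le_of_le {a t : ℝ} (h : a ≤ t) :
    invMillsRatio t ≤ stdNormalPDF 0 / stdNormalCDF a :=
  div_le_div₀ (stdNormalPDF_pos 0).le (stdNormalPDF_le_stdNormalPDF_zero t) (stdNormalCDF_pos a)
    (monotone_stdNormalCDF h)

lemma hasDerivAt_log_stdNormalCDF (t : ℝ) :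
    HasDerivAt (fun u => log (stdNormalCDF u)) (invMillsRatio t) t := by
  simpa [invMillsRatio, div_eq_inv_mul] using
    (hasDerivAt_stdNormalCDF t).log (stdNormalCDF_pos t).ne'

lemma hasDerivAt_invMillsRatio (t : ℝ) :
    HasDerivAt invMillsRatio (-invMillsRatio t * (t + invMillsRatio t)) t := by
  have hΦ := (stdNormalCDF_pos t).ne'
  have h : HasDerivAt invMillsRatio _ t :=
    (hasDerivAt_stdNormalPDF t).div (hasDerivAt_stdNormalCDF t) hΦ
  refine h.congr_deriv ?_
  unfold invMillsRatio
  field_simp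
  ring

theorem convexOn_log_stdNormalCDF_comp {S : Set ℝ} (hS : Convex ℝ S) {v v' v'' : ℝ → ℝ}
    (hv : ∀ x, HasDerivAt v (v' x) x) (hv' : ∀ x, HasDerivAt v' (v'' x) x)
    (h : ∀ x ∈ interior S, (v x + invMillsRatio (v x)) * v' x ^ 2 ≤ v'' x) :
    ConvexOn ℝ S (fun x => log (stdNormalCDF (v x))) := by
  have hf x : HasDerivAt (fun x => log (stdNormalCDF (v x))) (invMillsRatio (v x) * v' x) x :=
    (hasDerivAt_log_stdNormalCDF (v x)).comp x (hv x)
  have hf' x : HasDerivAt (fun x => invMillsRatio (v x) * v' x)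
      (invMillsRatio (v x) * (v'' x - (v x + invMillsRatio (v x)) * v' x ^ 2)) x := by
    exact (((hasDerivAt_invMillsRatio (v x)).comp x (hv x)).mul (hv' x)).congr_deriv (by simp only [Function.comp_apply]; ring)
  refine convexOn_of_hasDerivWithinAt2_nonneg hS
    (continuous_iff_continuousAt.2 fun x => (hf x).continuousAt).continuousOn
    (fun x _ => (hf x).hasDerivWithinAt) (fun x _ => (hf' x).hasDerivWithinAt) fun x hx => ?_
  exact mul_nonneg (invMillsRatio_pos _).le (sub_nonneg.2 (h x hx))

namespace GaussModel

noncomputable def ratio (A x : ℝ) : ℝ := A * exp (-x)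

noncomputable def scale (A x : ℝ) : ℝ := √(1 + ratio A x)

noncomputable def arg (s A x : ℝ) : ℝ := -s / scale A x

noncomputable def argDeriv (s A x : ℝ) : ℝ := -(s * ratio A x) / (2 * scale A x ^ 3)

noncomputable def argDeriv2 (s A x : ℝ) : ℝ :=
  s * ratio A x * (2 - ratio A x) / (4 * scale A x ^ 5)

variable {s A x : ℝ}

lemma ratio_nonneg (hA : 0 ≤ A) : 0 ≤ ratio A x := mul_nonneg hA (exp_pos _).le

lemma ratio_le_of_log_div_le {b : ℝ} (hA : 0 < A) (hb : 0 < b) (hx : log (A / b) ≤ x) :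
    ratio A x ≤ b :=
  calc ratio A x ≤ A * exp (-log (A / b)) := by unfold ratio; gcongr
    _ = b := by rw [exp_neg, exp_log (by positivity)]; field_simp

lemma hasDerivAt_ratio : HasDerivAt (ratio A) (-ratio A x) x :=
  ((hasDerivAt_neg x).exp.const_mul A).congr_deriv (by unfold ratio; ring)

lemma scale_sq (hA : 0 ≤ A) : scale A x ^ 2 = 1 + ratio A x :=
  sq_sqrt (by linarith [ratio_nonneg (x := x) hA])

lemma one_le_scale (hA : 0 ≤ A) : 1 ≤ scale A x :=
  one_le_sqrt.2 (by linarith [ratio_nonneg (x := x) hA])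

lemma hasDerivAt_scale (hA : 0 ≤ A) :
    HasDerivAt (scale A) (-ratio A x / (2 * scale A x)) x := by
  have h : 1 + ratio A x ≠ 0 := by linarith [ratio_nonneg (x := x) hA]
  exact (hasDerivAt_ratio.const_add 1).sqrt h

lemma neg_le_arg (hs : 0 ≤ s) (hA : 0 ≤ A) : -s ≤ arg s A x := by
  rw [arg, neg_div, neg_le_neg_iff]
  exact div_le_self hs (one_le_scale hA)

lemma arg_nonpos (hs : 0 ≤ s) (hA : 0 ≤ A) : arg s A x ≤ 0 :=
  div_nonpos_of_nonpos_of_nonneg (neg_nonpos.2 hs) (zero_le_one.trans (one_le_scale hA))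

lemma hasDerivAt_arg (hA : 0 ≤ A) : HasDerivAt (arg s A) (argDeriv s A x) x := by
  have hr := (zero_lt_one.trans_le (one_le_scale (x := x) hA)).ne'
  refine (((hasDerivAt_scale hA).inv hr).const_mul (-s)).congr_deriv ?_
  unfold argDeriv
  field_simp

lemma hasDerivAt_argDeriv (hA : 0 ≤ A) : HasDerivAt (argDeriv s A) (argDeriv2 s A x) x := by
  have hr := (zero_lt_one.trans_le (one_le_scale (x := x) hA)).ne'
  have hnum : HasDerivAt (fun x => -(s * ratio A x)) (-(s * -ratio A x)) x :=
    (hasDerivAt_ratio.const_mul s).neg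
  have hden : HasDerivAt (fun x => 2 * scale A x ^ 3)
      (2 * (3 * scale A x ^ 2 * (-ratio A x / (2 * scale A x)))) x :=
    ((hasDerivAt_scale hA).pow 3).const_mul 2
  refine (hnum.div hden (by positivity)).congr_deriv ?_
  unfold argDeriv2
  field_simp
  linear_combination 8 * s * ratio A x * scale_sq (x := x) hA

lemma add_mul_argDeriv_sq_le_argDeriv2 (hs : 0 ≤ s) (hA : 0 ≤ A) {l : ℝ} (hl : 0 ≤ l)
    (hls : l * s * ratio A x ≤ 2 - ratio A x) :
    (arg s A x + l) * argDeriv s A x ^ 2 ≤ argDeriv2 s A x := by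
  have hy := ratio_nonneg (x := x) hA
  have hr := one_le_scale (x := x) hA
  have hr0 : scale A x ≠ 0 := by positivity
  calc (arg s A x + l) * argDeriv s A x ^ 2 ≤ l * argDeriv s A x ^ 2 := by
        nlinarith [arg_nonpos (x := x) hs hA, sq_nonneg (argDeriv s A x)]
    _ = s * ratio A x * (l * s * ratio A x) / (4 * scale A x ^ 6) := by
        unfold argDeriv; field_simp; ring
    _ ≤ s * ratio A x * ((2 - ratio A x) * scale A x) / (4 * scale A x ^ 6) := by
        gcongr s * ratio A x * ?_ / _
        nlinarith [mul_nonneg (mul_nonneg hl hs) hy]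
    _ = argDeriv2 s A x := by
        unfold argDeriv2; field_simp

end GaussModel

open GaussModel in
/-- For fixed `s > 0` and `d > 0`, the approximate Gaussian-model error curve on
log-log scale, `x ↦ log Φ(-s / √(1 + d/(e^x s²)))`, is eventually convex:
it is convex on some half-line `[x₀, ∞)`. -/
theorem gaussModel_loglog_eventually_convex (s d : ℝ) (hs : 0 < s) (hd : 0 < d) :
    ∃ x₀ : ℝ, ConvexOn ℝ (Set.Ici x₀)
      (fun x : ℝ =>
        Real.log (stdNormalCDF (-s / Real.sqrt (1 + d / (Real.exp x * s ^ 2))))) := by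
  set A := d / s ^ 2
  have hA : 0 < A := by positivity
  have hmodel : (fun x => log (stdNormalCDF (-s / √(1 + d / (exp x * s ^ 2))))) =
      fun x => log (stdNormalCDF (arg s A x)) := by
    ext x
    simp only [arg, scale, ratio, A, exp_neg]
    field_simp
  set C := stdNormalPDF 0 / stdNormalCDF (-s)
  refine ⟨log (A / (2 / (1 + C * s))), hmodel ▸ convexOn_log_stdNormalCDF_comp (convex_Ici _)
    (fun x => hasDerivAt_arg hA.le) (fun x => hasDerivAt_argDeriv hA.le) fun x hx => ?_⟩
  have hy : ratio A x * (1 + C * s) ≤ 2 := by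
    rw [interior_Ici] at hx
    have hC : 0 < C := div_pos (stdNormalPDF_pos 0) (stdNormalCDF_pos _)
    exact (le_div_iff₀ (by positivity)).1 (ratio_le_of_log_div_le hA (by positivity) hx.le)
  refine add_mul_argDeriv_sq_le_argDeriv2 hs.le hA.le (invMillsRatio_pos _).le ?_
  calc invMillsRatio (arg s A x) * s * ratio A x ≤ C * s * ratio A x := by
        gcongr
        · exact ratio_nonneg hA.le
        · exact invMillsRatio_le_of_le (neg_le_arg hs.le hA.le)
    _ ≤ 2 - ratio A x := by linarith
end

section
/- Let g ∼ N(0, I_{d−1}) and ε ∼ N(0,1) be independent, s > 0, n ≥ 1. Define R = (s² + sε/√n) / √(s² + 2sε/√n + (ε² + ‖g‖²)/n). Then as n → ∞, R → s almost surely, and the first-order expansion R = s − (‖g‖²)/(2sn) + O_p(n^{−3/2}) holds, where ‖g‖² ∼ χ²_{d−1}. -/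
open MeasureTheory ProbabilityTheory Filter Topology

/-!
With `r = 1/√n` and `Q = ‖g‖²` the ratio is `s (s + rε) / √((s + rε)² + r² Q)`, a function of `r`
continuous at `r = 0` with value `s`; so `R → s` for every sample, not only almost surely.

For the expansion, `s t / √(t² + q) = s - q/(2s) + O(q |t² - s²| + q²)` when `t ≥ s/2`, while the
left side is crudely bounded otherwise. With `a = t - s`, both regimes are dominated by one
polynomial bound `B(a, q)` satisfying `B(ra, r²q) ≤ r³ B(a, q)` for `r ≤ 1`. Hence `n^{3/2}` times
the remainder is bounded, for every `n`, by the single finite random variable `B(ε, Q)`, which is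
tight.
-/

lemma abs_mul_div_sqrt_sq_add_sub_le_of_half_le {s t q : ℝ} (hs : 0 < s) (ht : s / 2 ≤ t)
    (hq : 0 ≤ q) :
    |s * t / √(t ^ 2 + q) - (s - q / (2 * s))| ≤ (2 * q * |t ^ 2 - s ^ 2| + 2 * q ^ 2) / s ^ 3 := by
  set D := √(t ^ 2 + q)
  have hD2 : D ^ 2 = t ^ 2 + q := Real.sq_sqrt (by positivity)
  have htD : t ≤ D := Real.le_sqrt_of_sq_le (by linarith)
  have hD : s / 2 ≤ D := ht.trans htD
  have hDpos : 0 < D := by linarith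
  have htDpos : 0 < t + D := by linarith
  have hdenom : 0 < 2 * s * D * (t + D) := by positivity
  -- `s t / D - s = -s q / (D (t + D))` since `D² - t² = q`
  have hident : s * t / D - (s - q / (2 * s)) =
      q * (2 * (t ^ 2 - s ^ 2) + (t * D - t ^ 2) + q) / (2 * s * D * (t + D)) := by
    field_simp
    linear_combination (q - 2 * s ^ 2) * hD2
  have hnum : |2 * (t ^ 2 - s ^ 2) + (t * D - t ^ 2) + q| ≤ 2 * |t ^ 2 - s ^ 2| + 2 * q := by
    have : t * D - t ^ 2 ≤ q := by nlinarith
    have : 0 ≤ t * D - t ^ 2 := by nlinarith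
    rw [abs_le]; constructor <;> linarith [le_abs_self (t ^ 2 - s ^ 2), neg_abs_le (t ^ 2 - s ^ 2)]
  have hden : s ^ 3 ≤ 2 * s * D * (t + D) := by
    nlinarith [mul_le_mul ht hD (by positivity) (by linarith),
      mul_le_mul hD hD (by positivity) hDpos.le]
  rw [hident, abs_div, abs_mul, abs_of_pos hdenom, abs_of_nonneg hq]
  calc q * |2 * (t ^ 2 - s ^ 2) + (t * D - t ^ 2) + q| / (2 * s * D * (t + D))
      ≤ q * (2 * |t ^ 2 - s ^ 2| + 2 * q) / s ^ 3 := by gcongr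
    _ = _ := by ring

lemma abs_mul_div_sqrt_sq_add_sub_le {s t q : ℝ} (hs : 0 < s) (hq : 0 ≤ q) :
    |s * t / √(t ^ 2 + q) - (s - q / (2 * s))| ≤ 2 * s + q / (2 * s) := by
  have hratio : |s * t / √(t ^ 2 + q)| ≤ s := by
    rw [abs_div, abs_mul, abs_of_pos hs, abs_of_nonneg (Real.sqrt_nonneg _),
      ← Real.sqrt_sq_eq_abs]
    exact div_le_of_le_mul₀ (Real.sqrt_nonneg _) hs.le
      (mul_le_mul_of_nonneg_left (Real.sqrt_le_sqrt (by linarith [sq_nonneg t])) hs.le)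
  have : 0 ≤ q / (2 * s) := by positivity
  calc |s * t / √(t ^ 2 + q) - (s - q / (2 * s))|
      ≤ |s * t / √(t ^ 2 + q)| + |s - q / (2 * s)| := abs_sub _ _
    _ ≤ s + (s + q / (2 * s)) := by
        gcongr
        rw [abs_le]; constructor <;> linarith
    _ = 2 * s + q / (2 * s) := by ring

noncomputable def remainderBound (s a q : ℝ) : ℝ :=
  (2 * q * |a| * (2 * s + |a|) + 2 * q ^ 2) / s ^ 3 + 16 * a ^ 4 * (2 * s + q / (2 * s)) / s ^ 4

lemma abs_mul_div_sqrt_sq_add_sub_le_remainderBound {s a q : ℝ} (hs : 0 < s) (hq : 0 ≤ q) :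
    |s * (s + a) / √((s + a) ^ 2 + q) - (s - q / (2 * s))| ≤ remainderBound s a q := by
  unfold remainderBound
  rcases le_or_gt |a| (s / 2) with ha | ha
  · have hsq : |(s + a) ^ 2 - s ^ 2| ≤ |a| * (2 * s + |a|) := by
      rw [show (s + a) ^ 2 - s ^ 2 = a * (2 * s + a) by ring, abs_mul]
      gcongr
      exact (abs_add_le _ _).trans_eq (by rw [abs_of_pos (by positivity)])
    have hlocal := abs_mul_div_sqrt_sq_add_sub_le_of_half_le hs
      (show s / 2 ≤ s + a by linarith [neg_abs_le a]) hq
    have : 2 * q * |(s + a) ^ 2 - s ^ 2| ≤ 2 * q * |a| * (2 * s + |a|) := by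
      rw [mul_assoc _ |a|]; gcongr
    have : (2 * q * |(s + a) ^ 2 - s ^ 2| + 2 * q ^ 2) / s ^ 3
        ≤ (2 * q * |a| * (2 * s + |a|) + 2 * q ^ 2) / s ^ 3 := by gcongr
    have : 0 ≤ 16 * a ^ 4 * (2 * s + q / (2 * s)) / s ^ 4 := by positivity
    linarith
  · -- far from `s` the crude bound suffices, as then `16 a⁴ / s⁴ > 1`
    have hfar : 1 ≤ 16 * a ^ 4 / s ^ 4 := by
      have h := pow_le_pow_left₀ (by positivity) ha.le 4
      rw [Even.pow_abs ⟨2, rfl⟩, div_pow] at h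
      rw [le_div_iff₀ (by positivity)]
      linarith
    have hcrude := abs_mul_div_sqrt_sq_add_sub_le (t := s + a) hs hq
    have : 2 * s + q / (2 * s) ≤ 16 * a ^ 4 * (2 * s + q / (2 * s)) / s ^ 4 := by
      rw [mul_div_right_comm]
      exact le_mul_of_one_le_left (by positivity) hfar
    have : 0 ≤ (2 * q * |a| * (2 * s + |a|) + 2 * q ^ 2) / s ^ 3 := by positivity
    linarith

lemma remainderBound_scale_le {s a q r : ℝ} (hs : 0 < s) (hq : 0 ≤ q) (hr₀ : 0 ≤ r)
    (hr₁ : r ≤ 1) : remainderBound s (r * a) (r ^ 2 * q) ≤ r ^ 3 * remainderBound s a q := by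
  unfold remainderBound
  rw [abs_mul, abs_of_nonneg hr₀]
  have h1 : r * |a| ≤ |a| := mul_le_of_le_one_left (abs_nonneg a) hr₁
  have h2 : r ^ 2 * q ≤ q := mul_le_of_le_one_left hq (pow_le_one₀ hr₀ hr₁)
  have h4 : r ^ 4 ≤ r ^ 3 := pow_le_pow_of_le_one hr₀ hr₁ (by norm_num)
  calc (2 * (r ^ 2 * q) * (r * |a|) * (2 * s + r * |a|) + 2 * (r ^ 2 * q) ^ 2) / s ^ 3 +
        16 * (r * a) ^ 4 * (2 * s + r ^ 2 * q / (2 * s)) / s ^ 4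
      = (r ^ 3 * (2 * q * |a| * (2 * s + r * |a|)) + r ^ 4 * (2 * q ^ 2)) / s ^ 3 +
        r ^ 4 * (16 * a ^ 4 * (2 * s + r ^ 2 * q / (2 * s))) / s ^ 4 := by ring
    _ ≤ (r ^ 3 * (2 * q * |a| * (2 * s + |a|)) + r ^ 3 * (2 * q ^ 2)) / s ^ 3 +
        r ^ 3 * (16 * a ^ 4 * (2 * s + q / (2 * s))) / s ^ 4 := by gcongr
    _ = _ := by ring

noncomputable def signalRatio (s ε Q r : ℝ) : ℝ :=
  s * (s + r * ε) / √((s + r * ε) ^ 2 + r ^ 2 * Q)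

lemma signalRatio_inv_sqrt (s ε Q : ℝ) (n : ℕ) :
    (s ^ 2 + s * ε / √n) / √(s ^ 2 + 2 * s * ε / √n + (ε ^ 2 + Q) / n) =
      signalRatio s ε Q (√n)⁻¹ := by
  have hsq : ((√(n : ℝ))⁻¹) ^ 2 = (n : ℝ)⁻¹ := by rw [inv_pow, Real.sq_sqrt n.cast_nonneg]
  unfold signalRatio
  congr 2
  · ring
  · rw [add_sq, mul_pow, hsq]; ring

lemma tendsto_signalRatio_zero {s : ℝ} (hs : 0 < s) (ε Q : ℝ) :
    Tendsto (signalRatio s ε Q) (𝓝 0) (𝓝 s) := by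
  have hcont : ContinuousAt (signalRatio s ε Q) 0 := by
    refine ContinuousAt.div (by fun_prop) (by fun_prop) ?_
    simp [Real.sqrt_sq hs.le, hs.ne']
  simpa [signalRatio, Real.sqrt_sq hs.le] using hcont.tendsto

lemma abs_signalRatio_sub_le {s Q r : ℝ} (hs : 0 < s) (hQ : 0 ≤ Q) (hr₀ : 0 ≤ r) (hr₁ : r ≤ 1)
    (ε : ℝ) :
    |signalRatio s ε Q r - (s - r ^ 2 * Q / (2 * s))| ≤ r ^ 3 * remainderBound s ε Q :=
  (abs_mul_div_sqrt_sq_add_sub_le_remainderBound hs (by positivity)).trans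
    (remainderBound_scale_le hs hQ hr₀ hr₁)

lemma abs_rpow_three_halves_mul_signalRatio_sub_le {s Q : ℝ} (hs : 0 < s) (hQ : 0 ≤ Q) (ε : ℝ)
    {n : ℕ} (hn : 1 ≤ n) :
    |(n : ℝ) ^ ((3 : ℝ) / 2) * (signalRatio s ε Q (√n)⁻¹ - (s - Q / (2 * s * n)))| ≤
      remainderBound s ε Q := by
  have hn₀ : (0 : ℝ) < n := by exact_mod_cast hn
  have hr₁ : (√(n : ℝ))⁻¹ ≤ 1 := inv_le_one_of_one_le₀ (Real.one_le_sqrt.2 (by exact_mod_cast hn))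
  have hpow : (n : ℝ) ^ ((3 : ℝ) / 2) = ((√(n : ℝ))⁻¹ ^ 3)⁻¹ := by
    rw [inv_pow, inv_inv, Real.sqrt_eq_rpow, ← Real.rpow_natCast, ← Real.rpow_mul hn₀.le]
    norm_num
  have hQn : Q / (2 * s * n) = (√(n : ℝ))⁻¹ ^ 2 * Q / (2 * s) := by
    rw [inv_pow, Real.sq_sqrt hn₀.le]; field_simp
  have hr₃ : 0 < (√(n : ℝ))⁻¹ ^ 3 := by positivity
  rw [hpow, hQn, abs_mul, abs_inv, abs_of_pos hr₃, inv_mul_le_iff₀ hr₃]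
  exact abs_signalRatio_sub_le hs hQ (by positivity) hr₁ ε

lemma tendsto_measure_setOf_lt_atTop {Ω : Type*} [MeasurableSpace Ω] (μ : Measure Ω)
    [IsFiniteMeasure μ] {f : Ω → ℝ} (hf : AEMeasurable f μ) :
    Tendsto (fun C : ℝ => μ {ω | C < f ω}) atTop (𝓝 0) := by
  have hempty : (⋂ C : ℝ, {ω | C < f ω}) = ∅ :=
    Set.iInter_eq_empty_iff.2 fun ω => ⟨f ω, lt_irrefl (f ω)⟩
  simpa [hempty, Function.comp_def] using
    tendsto_measure_iInter_atTop (μ := μ) (s := fun C : ℝ => {ω | C < f ω})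
    (fun C => nullMeasurableSet_lt aemeasurable_const hf)
    (fun _ _ hCC' _ hω => hCC'.trans_lt hω) ⟨0, measure_ne_top μ _⟩

theorem gaussModel_signal_expansion_general (d : ℕ) (hd : 0 < d) (s : ℝ) (hs : 0 < s)
    {Ω : Type*} [MeasurableSpace Ω] (μ : Measure Ω) [IsProbabilityMeasure μ]
    (Z : Ω → Fin d → ℝ) (hZmeas : Measurable Z) :
    (∀ᵐ ω ∂μ,
      Tendsto (fun n : ℕ =>
        (s ^ 2 + s * Z ω ⟨0, hd⟩ / Real.sqrt n) /
          Real.sqrt (s ^ 2 + 2 * s * Z ω ⟨0, hd⟩ / Real.sqrt n +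
            (Z ω ⟨0, hd⟩ ^ 2 + ∑ j ∈ Finset.univ.erase ⟨0, hd⟩, Z ω j ^ 2) / n))
        atTop (𝓝 s)) ∧
    (∀ δ : ℝ, 0 < δ → ∃ C : ℝ, 0 < C ∧ ∀ n : ℕ, 1 ≤ n →
      μ {ω | C < |(n : ℝ) ^ ((3 : ℝ) / 2) *
          ((s ^ 2 + s * Z ω ⟨0, hd⟩ / Real.sqrt n) /
              Real.sqrt (s ^ 2 + 2 * s * Z ω ⟨0, hd⟩ / Real.sqrt n +
                (Z ω ⟨0, hd⟩ ^ 2 + ∑ j ∈ Finset.univ.erase ⟨0, hd⟩, Z ω j ^ 2) / n) -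
            (s - (∑ j ∈ Finset.univ.erase ⟨0, hd⟩, Z ω j ^ 2) / (2 * s * n)))|}
        ≤ ENNReal.ofReal δ) := by
  set ε : Ω → ℝ := fun ω => Z ω ⟨0, hd⟩
  set Q : Ω → ℝ := fun ω => ∑ j ∈ Finset.univ.erase ⟨0, hd⟩, Z ω j ^ 2
  have hQ (ω : Ω) : 0 ≤ Q ω := Finset.sum_nonneg fun _ _ => sq_nonneg _
  simp_rw [signalRatio_inv_sqrt]
  refine ⟨ae_of_all μ fun ω => (tendsto_signalRatio_zero hs (ε ω) (Q ω)).comp ?_, fun δ hδ => ?_⟩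
  · exact tendsto_inv_atTop_zero.comp (Real.tendsto_sqrt_atTop.comp tendsto_natCast_atTop_atTop)
  · have hB : Measurable fun ω => remainderBound s (ε ω) (Q ω) := by
      unfold remainderBound; fun_prop
    obtain ⟨C, hCμ, hC⟩ := ((tendsto_measure_setOf_lt_atTop μ hB.aemeasurable).eventually_le_const
      (ENNReal.ofReal_pos.2 hδ) |>.and (eventually_gt_atTop 0)).exists
    refine ⟨C, hC, fun n hn => (measure_mono fun ω hω => ?_).trans hCμ⟩
    exact hω.trans_le (abs_rpow_three_halves_mul_signalRatio_sub_le hs (hQ ω) (ε ω) hn)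

/-- Let `Z ~ N(0, I_d)` with `ε = Z₀` and `g = (Z₁,…,Z_{d-1}) ~ N(0, I_{d-1})`
independent of `ε`, `s > 0`, and
`R n = (s² + s ε/√n) / √(s² + 2 s ε/√n + (ε² + ‖g‖²)/n)`.
Then `R n → s` almost surely as `n → ∞`, and the first-order expansion
`R n = s - ‖g‖²/(2 s n) + O_p(n^{-3/2})` holds: the rescaled remainder
`n^{3/2} (R n - (s - ‖g‖²/(2 s n)))` is bounded in probability. -/
theorem gaussModel_signal_expansion (d : ℕ) (hd : 0 < d) (s : ℝ) (hs : 0 < s)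
    {Ω : Type*} [MeasurableSpace Ω] (μ : Measure Ω) [IsProbabilityMeasure μ]
    (Z : Ω → Fin d → ℝ) (hZmeas : Measurable Z)
    (hZ : μ.map Z = Measure.pi fun _ : Fin d => gaussianReal 0 1) :
    (∀ᵐ ω ∂μ,
      Tendsto (fun n : ℕ =>
        (s ^ 2 + s * Z ω ⟨0, hd⟩ / Real.sqrt n) /
          Real.sqrt (s ^ 2 + 2 * s * Z ω ⟨0, hd⟩ / Real.sqrt n +
            (Z ω ⟨0, hd⟩ ^ 2 + ∑ j ∈ Finset.univ.erase ⟨0, hd⟩, Z ω j ^ 2) / n))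
        atTop (𝓝 s)) ∧
    (∀ δ : ℝ, 0 < δ → ∃ C : ℝ, 0 < C ∧ ∀ n : ℕ, 1 ≤ n →
      μ {ω | C < |(n : ℝ) ^ ((3 : ℝ) / 2) *
          ((s ^ 2 + s * Z ω ⟨0, hd⟩ / Real.sqrt n) /
              Real.sqrt (s ^ 2 + 2 * s * Z ω ⟨0, hd⟩ / Real.sqrt n +
                (Z ω ⟨0, hd⟩ ^ 2 + ∑ j ∈ Finset.univ.erase ⟨0, hd⟩, Z ω j ^ 2) / n) -
            (s - (∑ j ∈ Finset.univ.erase ⟨0, hd⟩, Z ω j ^ 2) / (2 * s * n)))|}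
        ≤ ENNReal.ofReal δ) :=
  gaussModel_signal_expansion_general d hd s hs μ Z hZmeas
end
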